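/- Let I be a finitely supported complete m-primary ideal of a regular local ring (R, m), with base points R = R₀, R₁, …, R_s and point basis (a₀, a₁, …, a_s) where a_i = ord_{R_i}(I^{R_i}). If gcd(a₀, a₁, …, a_s) = 1, and assuming (Lipman) that projectively equivalent complete ideals J with closure(I^n) = closure(J^m) satisfy n·(a₀,…,a_s) = m·(b₀,…,b_s) for the point basis (b_i) of J, and that equality of point bases of complete finitely supported ideals implies equality of the ideals, then I is projectively full: every complete ideal J projectively equivalent to I equals the closure of I^r for some positive integer r. -/

import Mathlib

open IsLocalRing

/-- A Noetherian local ring is *regular* if its maximal ideal can be generated by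
`ringKrullDim R` elements. -/
def IsRegularLocal (R : Type*) [CommRing R] [IsLocalRing R] : Prop :=
  IsNoetherianRing R ∧ ∃ s : Finset R,
    Ideal.span (s : Set R) = maximalIdeal R ∧
    (s.card : WithBot (WithTop ℕ)) = ringKrullDim R

/-- `α` is integral over the ideal `I`. -/
def IsIntegralOverIdeal {R : Type*} [CommRing R] (I : Ideal R) (α : R) : Prop :=
  ∃ n : ℕ, 0 < n ∧ ∃ r : ℕ → R, (∀ i, r i ∈ I ^ i) ∧
    α ^ n + ∑ i ∈ Finset.range n, r (i + 1) * α ^ (n - 1 - i) = 0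

/-- The integral closure of an ideal, as a set. -/
def idealIntClosure {R : Type*} [CommRing R] (I : Ideal R) : Set R :=
  {α | IsIntegralOverIdeal I α}

theorem Finset.dvd_of_dvd_mul_of_gcd_eq_one {ι α : Type*} [CommMonoidWithZero α]
    [NormalizedGCDMonoid α] {s : Finset ι} {f : ι → α} (hf : s.gcd f = 1) {m n : α}
    (h : ∀ i ∈ s, m ∣ n * f i) : m ∣ n := by
  have hdvd : m ∣ s.gcd (fun i => n * f i) := Finset.dvd_gcd h
  rwa [(Finset.gcd_mul_left' s f n).dvd_iff_dvd_right, hf, mul_one] at hdvd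

theorem Nat.exists_eq_mul_of_mul_eq_mul_of_gcd_eq_one {ι : Type*} [Fintype ι] {a b : ι → ℕ}
    (ha : Finset.univ.gcd a = 1) {n m : ℕ} (hm : 0 < m) (h : ∀ i, n * a i = m * b i) :
    ∃ r, n = m * r ∧ ∀ i, b i = r * a i := by
  obtain ⟨r, rfl⟩ := Finset.dvd_of_dvd_mul_of_gcd_eq_one ha fun i _ => ⟨b i, h i⟩
  refine ⟨r, rfl, fun i => (Nat.eq_of_mul_eq_mul_left hm ?_).symm⟩
  rw [← mul_assoc, h i]

theorem stmt19_general (R : Type*) [CommRing R]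
    (I : Ideal R)
    (s : ℕ)
    -- the point basis of `I` is `a = (a₀, …, a_s)`, recorded by a point-basis function `B`
    -- on the (finitely supported complete) ideals of `R`
    (a : Fin (s + 1) → ℕ) (B : Ideal R → Fin (s + 1) → ℕ)
    (hgcd : Finset.univ.gcd a = 1)
    -- (Lipman) projectively equivalent complete ideals have proportional point bases:
    (hprop : ∀ (J : Ideal R) (n m : ℕ), 0 < n → 0 < m →
      (J : Set R) = idealIntClosure J → idealIntClosure (I ^ n) = idealIntClosure (J ^ m) →
      ∀ i, n * a i = m * B J i)
    -- (Lipman) complete ideals with equal point bases are equal: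
    (heq : ∀ J L : Ideal R, (J : Set R) = idealIntClosure J → (L : Set R) = idealIntClosure L →
      B J = B L → J = L)
    -- the integral closure of `I ^ r` is a complete ideal with point basis `r • a`:
    (hpow : ∀ r : ℕ, 0 < r → ∃ Ir : Ideal R, (Ir : Set R) = idealIntClosure (I ^ r) ∧
      (Ir : Set R) = idealIntClosure Ir ∧ ∀ i, B Ir i = r * a i) :
    -- then `I` is projectively full
    ∀ (J : Ideal R) (n m : ℕ), 0 < n → 0 < m → (J : Set R) = idealIntClosure J →
      idealIntClosure (I ^ n) = idealIntClosure (J ^ m) →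
      ∃ r : ℕ, 0 < r ∧ (J : Set R) = idealIntClosure (I ^ r) := by
  intro J n m hn hm hJ hIJ
  obtain ⟨r, rfl, hBJ⟩ :=
    Nat.exists_eq_mul_of_mul_eq_mul_of_gcd_eq_one hgcd hm (hprop J n m hn hm hJ hIJ)
  have hr : 0 < r := Nat.pos_of_mul_pos_left hn
  obtain ⟨Ir, hIr, hIrc, hBIr⟩ := hpow r hr
  have hIrJ : Ir = J := heq Ir J hIrc hJ (funext fun i => (hBIr i).trans (hBJ i).symm)
  exact ⟨r, hr, hIrJ ▸ hIr⟩

theorem stmt19 (R : Type*) [CommRing R] [IsLocalRing R] [IsDomain R]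
    (hreg : IsRegularLocal R)
    (I : Ideal R) (hIne : I ≠ ⊤) (hIprim : I.radical = maximalIdeal R)
    (hIcomplete : (I : Set R) = idealIntClosure I)
    (s : ℕ)
    -- the point basis of `I` is `a = (a₀, …, a_s)`, recorded by a point-basis function `B`
    -- on the (finitely supported complete) ideals of `R`
    (a : Fin (s + 1) → ℕ) (B : Ideal R → Fin (s + 1) → ℕ) (hBI : B I = a)
    (hgcd : Finset.univ.gcd a = 1)
    -- (Lipman) projectively equivalent complete ideals have proportional point bases:
    (hprop : ∀ (J : Ideal R) (n m : ℕ), 0 < n → 0 < m →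
      (J : Set R) = idealIntClosure J → idealIntClosure (I ^ n) = idealIntClosure (J ^ m) →
      ∀ i, n * a i = m * B J i)
    -- (Lipman) complete ideals with equal point bases are equal:
    (heq : ∀ J L : Ideal R, (J : Set R) = idealIntClosure J → (L : Set R) = idealIntClosure L →
      B J = B L → J = L)
    -- the integral closure of `I ^ r` is a complete ideal with point basis `r • a`:
    (hpow : ∀ r : ℕ, 0 < r → ∃ Ir : Ideal R, (Ir : Set R) = idealIntClosure (I ^ r) ∧
      (Ir : Set R) = idealIntClosure Ir ∧ ∀ i, B Ir i = r * a i) :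
    -- then `I` is projectively full
    ∀ (J : Ideal R) (n m : ℕ), 0 < n → 0 < m → (J : Set R) = idealIntClosure J →
      idealIntClosure (I ^ n) = idealIntClosure (J ^ m) →
      ∃ r : ℕ, 0 < r ∧ (J : Set R) = idealIntClosure (I ^ r) :=
  stmt19_general R I s a B hgcd hprop heq hpow
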